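/- arXiv:1604.08135 — 5 statements merged into one kernel-verified Lean document; each statement's English description precedes it below -/
import Mathlib

section
/- Let ω: 𝕋 → ℝ be a smooth function on the circle 𝕋 = ℝ/ℤ with ω₀ ≤ ω(k) ≤ ω_max for all k, where ω₀ > 0, and let γ > 2 ω_max. Define Â_t(k) := exp(−t M̂_γ(k)) with M̂_γ(k) = [[0, ω(k)²], [−1, γ]]. Then there exist constants C, δ₀ > 0 (depending only on γ, ω₀, ω_max and ω) such that for every k ∈ 𝕋 and t ≥ 0, each entry of Â_t(k) is bounded in absolute value by C e^{−δ₀ t}, each entry of ∂_t Â_t(k) is bounded by C e^{−δ₀ t}, and each entry of ∂_k Â_t(k) is bounded by C e^{−δ₀ t/2}. -/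
set_option maxHeartbeats 1600000


open Matrix Real

lemma texp_le (δ t : ℝ) (hδ : 0 < δ) (ht : 0 ≤ t) :
    t * Real.exp (-δ * t) ≤ (2 / δ) * Real.exp (-δ * t / 2) := by
  have h1 : δ * t / 2 ≤ Real.exp (δ * t / 2) := by
    have := Real.add_one_le_exp (δ * t / 2); linarith
  have h2 : Real.exp (-δ * t) = Real.exp (-δ * t / 2) * Real.exp (-δ * t / 2) := by
    rw [← Real.exp_add]; ring_nf
  have h3 : Real.exp (-δ * t / 2) * Real.exp (δ * t / 2) = 1 := by
    rw [← Real.exp_add]; ring_nf; exact Real.exp_zero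
  have hE : 0 < Real.exp (-δ * t / 2) := Real.exp_pos _
  have h4 : t * Real.exp (-δ * t / 2) ≤ 2 / δ := by
    have h5 : t ≤ (2 / δ) * Real.exp (δ * t / 2) := by
      rw [div_mul_eq_mul_div, le_div_iff₀ hδ]; nlinarith
    calc t * Real.exp (-δ * t / 2) ≤ ((2 / δ) * Real.exp (δ * t / 2)) * Real.exp (-δ * t / 2) := by
          apply mul_le_mul_of_nonneg_right h5 hE.le
      _ = 2 / δ := by rw [mul_assoc, mul_comm (Real.exp _), h3, mul_one]
  calc t * Real.exp (-δ * t) = (t * Real.exp (-δ * t / 2)) * Real.exp (-δ * t / 2) := by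
        rw [h2]; ring
    _ ≤ (2 / δ) * Real.exp (-δ * t / 2) := mul_le_mul_of_nonneg_right h4 hE.le

lemma aux_decay (γ δ₀ μ₀ K : ℝ) (m a b m' a' b' : ℝ → ℝ)
    (hμ₀ : 0 < μ₀) (hδ₀ : 0 < δ₀) (hK : 0 < K)
    (hm : ∀ x, μ₀ ≤ m x) (hml : ∀ x, δ₀ ≤ γ / 2 - m x) (hmu : ∀ x, γ / 2 + m x ≤ γ)
    (hdm : ∀ x, HasDerivAt m (m' x) x) (hda : ∀ x, HasDerivAt a (a' x) x)
    (hdb : ∀ x, HasDerivAt b (b' x) x)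
    (hab : ∀ x, |a x| ≤ K) (hbb : ∀ x, |b x| ≤ K)
    (hab' : ∀ x, |a' x| ≤ K) (hbb' : ∀ x, |b' x| ≤ K) (hmb' : ∀ x, |m' x| ≤ K) :
    ∀ t k, 0 ≤ t →
      |(2 * m k)⁻¹ * (a k * Real.exp (-(t * (γ / 2 - m k))) +
          b k * Real.exp (-(t * (γ / 2 + m k))))|
        ≤ (K / μ₀ + K * γ / μ₀ + K ^ 2 / μ₀ ^ 2 + 2 * K ^ 2 / (δ₀ * μ₀)) * Real.exp (-δ₀ * t) ∧
      |deriv (fun s => (2 * m k)⁻¹ * (a k * Real.exp (-(s * (γ / 2 - m k))) +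
          b k * Real.exp (-(s * (γ / 2 + m k))))) t|
        ≤ (K / μ₀ + K * γ / μ₀ + K ^ 2 / μ₀ ^ 2 + 2 * K ^ 2 / (δ₀ * μ₀)) * Real.exp (-δ₀ * t) ∧
      |deriv (fun x => (2 * m x)⁻¹ * (a x * Real.exp (-(t * (γ / 2 - m x))) +
          b x * Real.exp (-(t * (γ / 2 + m x))))) k|
        ≤ (K / μ₀ + K * γ / μ₀ + K ^ 2 / μ₀ ^ 2 + 2 * K ^ 2 / (δ₀ * μ₀)) *
            Real.exp (-δ₀ * t / 2) := by
  intro t k ht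
  set C0 : ℝ := K / μ₀ + K * γ / μ₀ + K ^ 2 / μ₀ ^ 2 + 2 * K ^ 2 / (δ₀ * μ₀) with hC0
  have hmk := hm k
  have hmkpos : 0 < m k := lt_of_lt_of_le hμ₀ hmk
  have hl1 : δ₀ ≤ γ / 2 - m k := hml k
  have hl2 : γ / 2 + m k ≤ γ := hmu k
  have hl1pos : 0 < γ / 2 - m k := lt_of_lt_of_le hδ₀ hl1
  have hl1γ : γ / 2 - m k ≤ γ := by nlinarith
  have hl2δ : δ₀ ≤ γ / 2 + m k := by nlinarith
  have hγpos : 0 < γ := by nlinarith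
  set E : ℝ := Real.exp (-δ₀ * t) with hE
  set Eh : ℝ := Real.exp (-δ₀ * t / 2) with hEh
  have hEpos : 0 < E := Real.exp_pos _
  have hEhpos : 0 < Eh := Real.exp_pos _
  have hEEh : E ≤ Eh := by
    apply Real.exp_le_exp.2; nlinarith
  set E1 : ℝ := Real.exp (-(t * (γ / 2 - m k))) with hE1d
  set E2 : ℝ := Real.exp (-(t * (γ / 2 + m k))) with hE2d
  have hE1pos : 0 < E1 := Real.exp_pos _
  have hE2pos : 0 < E2 := Real.exp_pos _
  have hE1 : E1 ≤ E := by apply Real.exp_le_exp.2; nlinarith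
  have hE2 : E2 ≤ E := by apply Real.exp_le_exp.2; nlinarith
  have hcinv : (2 * m k)⁻¹ ≤ (2 * μ₀)⁻¹ := by
    apply inv_anti₀ (by linarith) (by linarith)
  have hcpos : 0 < (2 * m k)⁻¹ := by positivity
  have htE : t * E ≤ (2 / δ₀) * Eh := texp_le δ₀ t hδ₀ ht
  refine ⟨?_, ?_, ?_⟩
  · have h1 : |a k * E1 + b k * E2| ≤ K * E + K * E := by
      calc |a k * E1 + b k * E2| ≤ |a k * E1| + |b k * E2| := abs_add_le _ _
        _ = |a k| * E1 + |b k| * E2 := by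
            rw [abs_mul, abs_mul, abs_of_pos hE1pos, abs_of_pos hE2pos]
        _ ≤ K * E + K * E := by
            have h1 : |a k| * E1 ≤ K * E := mul_le_mul (hab k) hE1 hE1pos.le hK.le
            have h2 : |b k| * E2 ≤ K * E := mul_le_mul (hbb k) hE2 hE2pos.le hK.le
            linarith
    calc |(2 * m k)⁻¹ * (a k * E1 + b k * E2)|
        = (2 * m k)⁻¹ * |a k * E1 + b k * E2| := by
          rw [abs_mul, abs_of_pos hcpos]
      _ ≤ (2 * μ₀)⁻¹ * (K * E + K * E) := by
          apply mul_le_mul hcinv h1 (abs_nonneg _) (by positivity)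
      _ = (K / μ₀) * E := by field_simp; ring
      _ ≤ C0 * E := by
          apply mul_le_mul_of_nonneg_right _ hEpos.le
          rw [hC0]
          have h1 : 0 ≤ K * γ / μ₀ := by positivity
          have h2 : 0 ≤ K ^ 2 / μ₀ ^ 2 := by positivity
          have h3 : 0 ≤ 2 * K ^ 2 / (δ₀ * μ₀) := by positivity
          linarith
  · have hd1 : HasDerivAt (fun s : ℝ => Real.exp (-(s * (γ / 2 - m k))))
        (Real.exp (-(t * (γ / 2 - m k))) * (-(γ / 2 - m k))) t := by
      have : HasDerivAt (fun s : ℝ => -(s * (γ / 2 - m k))) (-(γ / 2 - m k)) t := by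
        simpa [Pi.neg_def] using ((hasDerivAt_id t).mul_const (γ / 2 - m k)).neg
      exact this.exp
    have hd2 : HasDerivAt (fun s : ℝ => Real.exp (-(s * (γ / 2 + m k))))
        (Real.exp (-(t * (γ / 2 + m k))) * (-(γ / 2 + m k))) t := by
      have : HasDerivAt (fun s : ℝ => -(s * (γ / 2 + m k))) (-(γ / 2 + m k)) t := by
        simpa [Pi.neg_def] using ((hasDerivAt_id t).mul_const (γ / 2 + m k)).neg
      exact this.exp
    have hD : HasDerivAt (fun s => (2 * m k)⁻¹ * (a k * Real.exp (-(s * (γ / 2 - m k))) +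
        b k * Real.exp (-(s * (γ / 2 + m k)))))
        ((2 * m k)⁻¹ * (a k * (E1 * (-(γ / 2 - m k))) + b k * (E2 * (-(γ / 2 + m k))))) t :=
      ((hd1.const_mul (a k)).add (hd2.const_mul (b k))).const_mul _
    rw [hD.deriv]
    have h1 : |a k * (E1 * (-(γ / 2 - m k))) + b k * (E2 * (-(γ / 2 + m k)))|
        ≤ K * (E * γ) + K * (E * γ) := by
      calc |a k * (E1 * (-(γ / 2 - m k))) + b k * (E2 * (-(γ / 2 + m k)))|
          ≤ |a k| * (E1 * (γ / 2 - m k)) + |b k| * (E2 * (γ / 2 + m k)) := by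
            refine le_trans (abs_add_le _ _) ?_
            rw [abs_mul, abs_mul, abs_mul, abs_mul, abs_neg, abs_neg,
              abs_of_pos hE1pos, abs_of_pos hE2pos,
              abs_of_pos hl1pos, abs_of_pos (by linarith : (0:ℝ) < γ / 2 + m k)]
        _ ≤ K * (E * γ) + K * (E * γ) := by
            have h1 : |a k| * (E1 * (γ / 2 - m k)) ≤ K * (E * γ) := by
              apply mul_le_mul (hab k) _ (by positivity) hK.le
              apply mul_le_mul hE1 hl1γ (by linarith) hEpos.le
            have h2 : |b k| * (E2 * (γ / 2 + m k)) ≤ K * (E * γ) := by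
              apply mul_le_mul (hbb k) _ (by positivity) hK.le
              apply mul_le_mul hE2 hl2 (by linarith) hEpos.le
            linarith
    calc |(2 * m k)⁻¹ * (a k * (E1 * (-(γ / 2 - m k))) + b k * (E2 * (-(γ / 2 + m k))))|
        = (2 * m k)⁻¹ * |a k * (E1 * (-(γ / 2 - m k))) + b k * (E2 * (-(γ / 2 + m k)))| := by
          rw [abs_mul, abs_of_pos hcpos]
      _ ≤ (2 * μ₀)⁻¹ * (K * (E * γ) + K * (E * γ)) := by
          apply mul_le_mul hcinv h1 (abs_nonneg _) (by positivity)
      _ = (K * γ / μ₀) * E := by field_simp; ring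
      _ ≤ C0 * E := by
          apply mul_le_mul_of_nonneg_right _ hEpos.le
          rw [hC0]
          have h1 : 0 ≤ K / μ₀ := by positivity
          have h2 : 0 ≤ K ^ 2 / μ₀ ^ 2 := by positivity
          have h3 : 0 ≤ 2 * K ^ 2 / (δ₀ * μ₀) := by positivity
          linarith
  · have hdm1 : HasDerivAt (fun x => -(t * (γ / 2 - m x))) (t * m' k) k := by
      have h : HasDerivAt (fun x => γ / 2 - m x) (-(m' k)) k := (hdm k).const_sub _
      have := (h.const_mul t).neg
      simpa [Pi.neg_def] using this
    have hdm2 : HasDerivAt (fun x => -(t * (γ / 2 + m x))) (-(t * m' k)) k := by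
      have h : HasDerivAt (fun x => γ / 2 + m x) (m' k) k := (hdm k).const_add _
      have := (h.const_mul t).neg
      simpa [Pi.neg_def] using this
    have hE1d' : HasDerivAt (fun x => Real.exp (-(t * (γ / 2 - m x)))) (E1 * (t * m' k)) k :=
      hdm1.exp
    have hE2d' : HasDerivAt (fun x => Real.exp (-(t * (γ / 2 + m x)))) (E2 * (-(t * m' k))) k :=
      hdm2.exp
    have hS : HasDerivAt (fun x => a x * Real.exp (-(t * (γ / 2 - m x))) +
        b x * Real.exp (-(t * (γ / 2 + m x))))
        ((a' k * E1 + a k * (E1 * (t * m' k))) + (b' k * E2 + b k * (E2 * (-(t * m' k))))) k :=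
      ((hda k).mul hE1d').add ((hdb k).mul hE2d')
    have hCinv : HasDerivAt (fun x => (2 * m x)⁻¹) (-(2 * m' k) / (2 * m k) ^ 2) k := by
      have h2m : HasDerivAt (fun x => 2 * m x) (2 * m' k) k := (hdm k).const_mul 2
      exact h2m.inv (by positivity)
    have hD : HasDerivAt (fun x => (2 * m x)⁻¹ * (a x * Real.exp (-(t * (γ / 2 - m x))) +
        b x * Real.exp (-(t * (γ / 2 + m x)))))
        ((-(2 * m' k) / (2 * m k) ^ 2) * (a k * E1 + b k * E2) +
          (2 * m k)⁻¹ * ((a' k * E1 + a k * (E1 * (t * m' k))) +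
            (b' k * E2 + b k * (E2 * (-(t * m' k)))))) k := hCinv.mul hS
    rw [hD.deriv]
    have hterm1 : |(-(2 * m' k) / (2 * m k) ^ 2) * (a k * E1 + b k * E2)|
        ≤ (K ^ 2 / μ₀ ^ 2) * E := by
      have hc : |(-(2 * m' k) / (2 * m k) ^ 2)| ≤ 2 * K / (2 * μ₀) ^ 2 := by
        rw [abs_div, abs_neg]
        have h1 : |2 * m' k| ≤ 2 * K := by
          rw [abs_mul]; simp only [abs_two]
          nlinarith [hmb' k, abs_nonneg (m' k)]
        have h2 : (2 * μ₀) ^ 2 ≤ |(2 * m k) ^ 2| := by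
          rw [abs_of_pos (by positivity)]
          nlinarith
        apply div_le_div₀ (by positivity) h1 (by positivity) h2
      have hs : |a k * E1 + b k * E2| ≤ 2 * K * E := by
        calc |a k * E1 + b k * E2| ≤ |a k| * E1 + |b k| * E2 := by
              refine le_trans (abs_add_le _ _) ?_
              rw [abs_mul, abs_mul, abs_of_pos hE1pos, abs_of_pos hE2pos]
          _ ≤ K * E + K * E := by
              have h1 := mul_le_mul (hab k) hE1 hE1pos.le hK.le
              have h2 := mul_le_mul (hbb k) hE2 hE2pos.le hK.le
              linarith
          _ = 2 * K * E := by ring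
      calc |(-(2 * m' k) / (2 * m k) ^ 2) * (a k * E1 + b k * E2)|
          = |(-(2 * m' k) / (2 * m k) ^ 2)| * |a k * E1 + b k * E2| := abs_mul _ _
        _ ≤ (2 * K / (2 * μ₀) ^ 2) * (2 * K * E) := by
            apply mul_le_mul hc hs (abs_nonneg _) (by positivity)
        _ = (K ^ 2 / μ₀ ^ 2) * E := by field_simp
    have hterm2 : |(2 * m k)⁻¹ * ((a' k * E1 + a k * (E1 * (t * m' k))) +
        (b' k * E2 + b k * (E2 * (-(t * m' k)))))|
        ≤ (K / μ₀) * E + (K ^ 2 / μ₀) * (t * E) := by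
      have hs : |(a' k * E1 + a k * (E1 * (t * m' k))) +
          (b' k * E2 + b k * (E2 * (-(t * m' k))))|
          ≤ 2 * (K * E) + 2 * (K * K * (t * E)) := by
        have ha1 : |a' k * E1| ≤ K * E := by
          rw [abs_mul, abs_of_pos hE1pos]
          exact mul_le_mul (hab' k) hE1 hE1pos.le hK.le
        have hb1 : |b' k * E2| ≤ K * E := by
          rw [abs_mul, abs_of_pos hE2pos]
          exact mul_le_mul (hbb' k) hE2 hE2pos.le hK.le
        have ha2 : |a k * (E1 * (t * m' k))| ≤ K * K * (t * E) := by
          rw [abs_mul, abs_mul, abs_mul, abs_of_pos hE1pos, abs_of_nonneg ht]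
          calc |a k| * (E1 * (t * |m' k|)) ≤ K * (E * (t * K)) := by
                apply mul_le_mul (hab k) _ (by positivity) hK.le
                exact mul_le_mul hE1 (by nlinarith [hmb' k, abs_nonneg (m' k)])
                  (by positivity) hEpos.le
            _ = K * K * (t * E) := by ring
        have hb2 : |b k * (E2 * (-(t * m' k)))| ≤ K * K * (t * E) := by
          rw [abs_mul, abs_mul, abs_neg, abs_mul, abs_of_pos hE2pos, abs_of_nonneg ht]
          calc |b k| * (E2 * (t * |m' k|)) ≤ K * (E * (t * K)) := by
                apply mul_le_mul (hbb k) _ (by positivity) hK.le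
                exact mul_le_mul hE2 (by nlinarith [hmb' k, abs_nonneg (m' k)])
                  (by positivity) hEpos.le
            _ = K * K * (t * E) := by ring
        calc |(a' k * E1 + a k * (E1 * (t * m' k))) + (b' k * E2 + b k * (E2 * (-(t * m' k))))|
            ≤ |a' k * E1| + |a k * (E1 * (t * m' k))| + |b' k * E2| +
                |b k * (E2 * (-(t * m' k)))| := by
              refine le_trans (abs_add_le _ _) ?_
              have := abs_add_le (a' k * E1) (a k * (E1 * (t * m' k)))
              have := abs_add_le (b' k * E2) (b k * (E2 * (-(t * m' k))))
              linarith
          _ ≤ 2 * (K * E) + 2 * (K * K * (t * E)) := by linarith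
      calc |(2 * m k)⁻¹ * ((a' k * E1 + a k * (E1 * (t * m' k))) +
          (b' k * E2 + b k * (E2 * (-(t * m' k)))))|
          = (2 * m k)⁻¹ * |(a' k * E1 + a k * (E1 * (t * m' k))) +
              (b' k * E2 + b k * (E2 * (-(t * m' k))))| := by
            rw [abs_mul, abs_of_pos hcpos]
        _ ≤ (2 * μ₀)⁻¹ * (2 * (K * E) + 2 * (K * K * (t * E))) := by
            apply mul_le_mul hcinv hs (abs_nonneg _) (by positivity)
        _ = (K / μ₀) * E + (K ^ 2 / μ₀) * (t * E) := by field_simp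
    have htE' : (K ^ 2 / μ₀) * (t * E) ≤ (2 * K ^ 2 / (δ₀ * μ₀)) * Eh := by
      calc (K ^ 2 / μ₀) * (t * E) ≤ (K ^ 2 / μ₀) * ((2 / δ₀) * Eh) :=
            mul_le_mul_of_nonneg_left htE (by positivity)
        _ = (2 * K ^ 2 / (δ₀ * μ₀)) * Eh := by field_simp
    calc |(-(2 * m' k) / (2 * m k) ^ 2) * (a k * E1 + b k * E2) +
        (2 * m k)⁻¹ * ((a' k * E1 + a k * (E1 * (t * m' k))) +
          (b' k * E2 + b k * (E2 * (-(t * m' k)))))|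
        ≤ (K ^ 2 / μ₀ ^ 2) * E + ((K / μ₀) * E + (K ^ 2 / μ₀) * (t * E)) := by
          refine le_trans (abs_add_le _ _) ?_; linarith
      _ ≤ (K ^ 2 / μ₀ ^ 2) * Eh + ((K / μ₀) * Eh + (2 * K ^ 2 / (δ₀ * μ₀)) * Eh) := by
          have h1 : (K ^ 2 / μ₀ ^ 2) * E ≤ (K ^ 2 / μ₀ ^ 2) * Eh :=
            mul_le_mul_of_nonneg_left hEEh (by positivity)
          have h2 : (K / μ₀) * E ≤ (K / μ₀) * Eh :=
            mul_le_mul_of_nonneg_left hEEh (by positivity)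
          linarith
      _ ≤ C0 * Eh := by
          rw [hC0]
          have : 0 ≤ K * γ / μ₀ := by positivity
          nlinarith

/-- The Fourier symbol `M̂_γ(k) = [[0, ω(k)²], [−1, γ]]`. -/
noncomputable def Mhat (ω : ℝ → ℝ) (γ : ℝ) (k : ℝ) : Matrix (Fin 2) (Fin 2) ℝ :=
  !![0, (ω k) ^ 2; -1, γ]

/-- `Â_t(k) = exp(−t M̂_γ(k))`. -/
noncomputable def Ahat (ω : ℝ → ℝ) (γ : ℝ) (t k : ℝ) : Matrix (Fin 2) (Fin 2) ℝ :=
  NormedSpace.exp (-(t • Mhat ω γ k))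

/-- Uniform exponential decay of the entries of `Â_t(k)` and of its `t`-
and `k`-derivatives, for a smooth pinned dispersion relation and large flip rate. -/
theorem Ahat_entries_exponential_decay
    (ω : ℝ → ℝ) (hsmooth : ContDiff ℝ (⊤ : ℕ∞) ω) (hper : Function.Periodic ω 1)
    (ω₀ ωmax γ : ℝ) (hω₀ : 0 < ω₀)
    (hbound : ∀ k : ℝ, ω₀ ≤ ω k ∧ ω k ≤ ωmax)
    (hγ : 2 * ωmax < γ) :
    ∃ C δ₀ : ℝ, 0 < C ∧ 0 < δ₀ ∧
      ∀ (k t : ℝ), 0 ≤ t → ∀ i j : Fin 2,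
        |Ahat ω γ t k i j| ≤ C * Real.exp (-δ₀ * t) ∧
        |deriv (fun s => Ahat ω γ s k i j) t| ≤ C * Real.exp (-δ₀ * t) ∧
        |deriv (fun x => Ahat ω γ t x i j) k| ≤ C * Real.exp (-δ₀ * t / 2) := by
  have hω0max : ω₀ ≤ ωmax := le_trans (hbound 0).1 (hbound 0).2
  have hωmaxpos : 0 < ωmax := lt_of_lt_of_le hω₀ hω0max
  have hγpos : 0 < γ := by linarith
  set m : ℝ → ℝ := fun k => Real.sqrt (γ ^ 2 / 4 - ω k ^ 2) with hmdef
  have hqmax : 0 < γ ^ 2 / 4 - ωmax ^ 2 := by nlinarith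
  have hquad : ∀ k, γ ^ 2 / 4 - ωmax ^ 2 ≤ γ ^ 2 / 4 - ω k ^ 2 ∧
      γ ^ 2 / 4 - ω k ^ 2 ≤ γ ^ 2 / 4 - ω₀ ^ 2 := by
    intro k
    have h1 := (hbound k).1
    have h2 := (hbound k).2
    constructor <;> nlinarith
  set μ₀ : ℝ := Real.sqrt (γ ^ 2 / 4 - ωmax ^ 2) with hμ₀def
  set μ₁ : ℝ := Real.sqrt (γ ^ 2 / 4 - ω₀ ^ 2) with hμ₁def
  have hμ₀pos : 0 < μ₀ := Real.sqrt_pos.2 hqmax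
  have hmlow : ∀ k, μ₀ ≤ m k := fun k => Real.sqrt_le_sqrt (hquad k).1
  have hmhigh : ∀ k, m k ≤ μ₁ := fun k => Real.sqrt_le_sqrt (hquad k).2
  have hμ₁lt : μ₁ < γ / 2 := by
    rw [hμ₁def, Real.sqrt_lt' (by linarith)]
    nlinarith
  set δ₀ : ℝ := γ / 2 - μ₁ with hδ₀def
  have hδ₀pos : 0 < δ₀ := by simp only [hδ₀def]; linarith
  have hm2 : ∀ k, m k ^ 2 = γ ^ 2 / 4 - ω k ^ 2 := fun k =>
    Real.sq_sqrt (le_trans hqmax.le (hquad k).1)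
  have hml : ∀ x, δ₀ ≤ γ / 2 - m x := fun x => by
    have := hmhigh x; simp only [hδ₀def]; linarith
  have hmu : ∀ x, γ / 2 + m x ≤ γ := fun x => by
    have := hmhigh x; linarith
  -- derivative of ω and its bound
  have hdω : ∀ x : ℝ, HasDerivAt ω (deriv ω x) x := fun x =>
    ((hsmooth.differentiable (by simp)) x).hasDerivAt
  obtain ⟨W, hWnn, hW⟩ : ∃ W : ℝ, 0 ≤ W ∧ ∀ x, |deriv ω x| ≤ W := by
    have hcont : Continuous (deriv ω) := hsmooth.continuous_deriv (by simp)
    obtain ⟨W, hW⟩ :=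
      (isCompact_Icc (a := (0:ℝ)) (b := 1)).exists_bound_of_continuousOn hcont.continuousOn
    have hperd : Function.Periodic (deriv ω) 1 := by
      intro y
      have hfun : (fun z => ω (z + 1)) = ω := funext fun z => hper z
      calc deriv ω (y + 1) = deriv (fun z => ω (z + 1)) y := (deriv_comp_add_const ω 1 y).symm
        _ = deriv ω y := by rw [hfun]
    refine ⟨W, le_trans (norm_nonneg (deriv ω 0)) (hW 0 (by norm_num)), fun x => ?_⟩
    obtain ⟨y, hy, hxy⟩ := hperd.exists_mem_Ico₀ one_pos x
    rw [hxy]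
    exact hW y (Set.Ico_subset_Icc_self hy)
  -- derivative of m
  set m' : ℝ → ℝ := fun x => -(2 * ω x * deriv ω x) / (2 * m x) with hm'def
  have hmpos : ∀ x, 0 < m x := fun x => lt_of_lt_of_le hμ₀pos (hmlow x)
  have hdm : ∀ x, HasDerivAt m (m' x) x := by
    intro x
    have h2 : HasDerivAt (fun y => ω y ^ 2) (2 * ω x * deriv ω x) x := by
      simpa [Pi.pow_def] using (hdω x).pow 2
    have h1 : HasDerivAt (fun y => γ ^ 2 / 4 - ω y ^ 2) (-(2 * ω x * deriv ω x)) x :=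
      h2.const_sub (γ ^ 2 / 4)
    have h3 : (γ ^ 2 / 4 - ω x ^ 2) ≠ 0 := ne_of_gt (lt_of_lt_of_le hqmax (hquad x).1)
    exact h1.sqrt h3
  -- global constant K
  set K : ℝ := γ + ωmax ^ 2 + 1 + 2 * ωmax * W + ωmax * W / μ₀ with hKdef
  have hK : 0 < K := by positivity
  have hbω : ∀ x, 0 < ω x ∧ ω x ≤ ωmax := fun x => ⟨lt_of_lt_of_le hω₀ (hbound x).1, (hbound x).2⟩
  have hKrest : 0 ≤ ωmax * W / μ₀ := by positivity
  have hωd : ∀ x, |2 * ω x * deriv ω x| ≤ 2 * ωmax * W := by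
    intro x
    have h4 := (hbω x).1
    have h5 := (hbω x).2
    have h6 := hW x
    rw [abs_mul, abs_mul, abs_two]
    have := abs_nonneg (deriv ω x)
    have habs : |ω x| ≤ ωmax := by rw [abs_of_pos h4]; exact h5
    nlinarith
  have hb1 : ∀ x, |γ / 2 + m x| ≤ K := by
    intro x
    have h2 := hmhigh x; have h1 := hmlow x
    rw [abs_of_pos (by linarith), hKdef]
    nlinarith [hμ₁lt]
  have hb2 : ∀ x, |-(γ / 2 - m x)| ≤ K := by
    intro x
    have h1 := hmlow x; have h3 := hml x
    rw [abs_neg, abs_of_pos (by linarith), hKdef]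
    nlinarith
  have hb3 : ∀ x, |ω x ^ 2| ≤ K := by
    intro x
    have h4 := (hbω x).1; have h5 := (hbω x).2
    rw [abs_of_pos (by positivity), hKdef]
    nlinarith
  have hb3' : ∀ x, |-(ω x ^ 2)| ≤ K := by
    intro x; rw [abs_neg]; exact hb3 x
  have hb1' : ∀ x : ℝ, |(1:ℝ)| ≤ K := by
    intro x; rw [abs_one, hKdef]; nlinarith
  have hb1'' : ∀ x : ℝ, |(-1:ℝ)| ≤ K := by
    intro x; rw [abs_neg, abs_one, hKdef]; nlinarith
  have hbm' : ∀ x, |m' x| ≤ K := by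
    intro x
    have hmx := hmpos x
    have : |m' x| = |2 * ω x * deriv ω x| / (2 * m x) := by
      rw [hm'def]
      simp only
      rw [abs_div, abs_neg, abs_of_pos (by linarith : (0:ℝ) < 2 * m x)]
    rw [this]
    have hstep : |2 * ω x * deriv ω x| / (2 * m x) ≤ (2 * ωmax * W) / (2 * μ₀) := by
      apply div_le_div₀ (by positivity) (hωd x) (by positivity)
      have := hmlow x; linarith
    refine le_trans hstep ?_
    have : (2 * ωmax * W) / (2 * μ₀) = ωmax * W / μ₀ := by
      field_simp
    rw [this, hKdef]
    nlinarith
  have hbω2' : ∀ x, |2 * ω x * deriv ω x| ≤ K := by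
    intro x
    refine le_trans (hωd x) ?_
    rw [hKdef]; nlinarith
  have hbω2'' : ∀ x, |-(2 * ω x * deriv ω x)| ≤ K := by
    intro x; rw [abs_neg]; exact hbω2' x
  have hb0 : ∀ x : ℝ, |(0:ℝ)| ≤ K := by
    intro x; rw [abs_zero]; exact hK.le
  -- derivatives of the coefficient functions
  have hda00 : ∀ x, HasDerivAt (fun x => γ / 2 + m x) (m' x) x := fun x => (hdm x).const_add _
  have hdb00 : ∀ x, HasDerivAt (fun x => -(γ / 2 - m x)) (m' x) x := by
    intro x
    have := ((hdm x).const_sub (γ / 2)).neg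
    simpa [Pi.neg_def] using this
  have hda01 : ∀ x, HasDerivAt (fun x => -(ω x ^ 2)) (-(2 * ω x * deriv ω x)) x := by
    intro x
    have h2 : HasDerivAt (fun y => ω y ^ 2) (2 * ω x * deriv ω x) x := by
      simpa [Pi.pow_def] using (hdω x).pow 2
    exact h2.neg
  have hdb01 : ∀ x, HasDerivAt (fun x => ω x ^ 2) (2 * ω x * deriv ω x) x := by
    intro x
    simpa [Pi.pow_def] using (hdω x).pow 2
  have hdc1 : ∀ x : ℝ, HasDerivAt (fun _ : ℝ => (1:ℝ)) 0 x := fun x => hasDerivAt_const x 1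
  have hdc1' : ∀ x : ℝ, HasDerivAt (fun _ : ℝ => (-1:ℝ)) 0 x := fun x => hasDerivAt_const x (-1)
  -- the explicit formula for Ahat
  have hentry : ∀ t k, Ahat ω γ t k =
      !![(2 * m k)⁻¹ * ((γ / 2 + m k) * Real.exp (-(t * (γ / 2 - m k))) +
            -(γ / 2 - m k) * Real.exp (-(t * (γ / 2 + m k)))),
         (2 * m k)⁻¹ * (-(ω k ^ 2) * Real.exp (-(t * (γ / 2 - m k))) +
            ω k ^ 2 * Real.exp (-(t * (γ / 2 + m k))));
         (2 * m k)⁻¹ * (1 * Real.exp (-(t * (γ / 2 - m k))) +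
            -1 * Real.exp (-(t * (γ / 2 + m k)))),
         (2 * m k)⁻¹ * (-(γ / 2 - m k) * Real.exp (-(t * (γ / 2 - m k))) +
            (γ / 2 + m k) * Real.exp (-(t * (γ / 2 + m k))))] := by
    intro t k
    have hmk := hmpos k
    have hmk2 : (2 * m k) ≠ 0 := by positivity
    set P : Matrix (Fin 2) (Fin 2) ℝ := !![γ / 2 + m k, γ / 2 - m k; 1, 1] with hP
    set Q : Matrix (Fin 2) (Fin 2) ℝ :=
      !![(2 * m k)⁻¹, -((γ / 2 - m k) * (2 * m k)⁻¹);
         -(2 * m k)⁻¹, (γ / 2 + m k) * (2 * m k)⁻¹] with hQ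
    have hdiagm : ∀ x y : ℝ, (Matrix.diagonal ![x, y] : Matrix (Fin 2) (Fin 2) ℝ) =
        !![x, 0; 0, y] := by
      intro x y; ext i j; fin_cases i <;> fin_cases j <;> simp [Matrix.diagonal_apply]
    have hPQ : P * Q = 1 := by
      rw [hP, hQ, Matrix.mul_fin_two, Matrix.one_fin_two]
      ext i j
      fin_cases i <;> fin_cases j <;> simp <;> (try field_simp [hmk.ne']) <;> (try ring)
    have hU : IsUnit P := (Matrix.isUnit_iff_isUnit_det P).mpr (Matrix.isUnit_det_of_right_inverse hPQ)
    have hPinv : P⁻¹ = Q := Matrix.inv_eq_right_inv hPQ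
    have hω2 : ω k ^ 2 = γ ^ 2 / 4 - m k ^ 2 := by
      have := hm2 k; linarith
    have hconj : -(t • Mhat ω γ k) =
        P * Matrix.diagonal ![-(t * (γ / 2 - m k)), -(t * (γ / 2 + m k))] * Q := by
      rw [hdiagm, hP, hQ, Matrix.mul_fin_two, Matrix.mul_fin_two]
      ext i j
      fin_cases i <;> fin_cases j <;> simp [Mhat, hω2] <;>
        (try field_simp [hmk.ne']) <;> (try ring)
    have hexpdiag : NormedSpace.exp
        (Matrix.diagonal ![-(t * (γ / 2 - m k)), -(t * (γ / 2 + m k))] :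
          Matrix (Fin 2) (Fin 2) ℝ) =
        Matrix.diagonal ![Real.exp (-(t * (γ / 2 - m k))), Real.exp (-(t * (γ / 2 + m k)))] := by
      rw [Matrix.exp_diagonal, Pi.exp_def]
      ext i j
      fin_cases i <;> fin_cases j <;> simp [Matrix.diagonal_apply, Real.exp_eq_exp_ℝ]
    have hform : Ahat ω γ t k = P * Matrix.diagonal
        ![Real.exp (-(t * (γ / 2 - m k))), Real.exp (-(t * (γ / 2 + m k)))] * Q := by
      rw [Ahat, hconj, ← hPinv, Matrix.exp_conj P _ hU, hPinv, hexpdiag]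
    rw [hform, hdiagm, hP, hQ, Matrix.mul_fin_two, Matrix.mul_fin_two]
    ext i j
    fin_cases i <;> fin_cases j <;> simp [hω2] <;>
      (try field_simp [hmk.ne']) <;> (try ring)
  -- assemble
  set C0 : ℝ := K / μ₀ + K * γ / μ₀ + K ^ 2 / μ₀ ^ 2 + 2 * K ^ 2 / (δ₀ * μ₀) with hC0
  refine ⟨C0, δ₀, by positivity, hδ₀pos, ?_⟩
  intro k t ht i j
  have h00 := aux_decay γ δ₀ μ₀ K m (fun x => γ / 2 + m x) (fun x => -(γ / 2 - m x))
    m' m' m' hμ₀pos hδ₀pos hK hmlow hml hmu hdm hda00 hdb00 hb1 hb2 hbm' hbm' hbm' t k ht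
  have h01 := aux_decay γ δ₀ μ₀ K m (fun x => -(ω x ^ 2)) (fun x => ω x ^ 2)
    m' (fun x => -(2 * ω x * deriv ω x)) (fun x => 2 * ω x * deriv ω x)
    hμ₀pos hδ₀pos hK hmlow hml hmu hdm hda01 hdb01 hb3' hb3 hbω2'' hbω2' hbm' t k ht
  have h10 := aux_decay γ δ₀ μ₀ K m (fun _ => (1:ℝ)) (fun _ => (-1:ℝ))
    m' (fun _ => (0:ℝ)) (fun _ => (0:ℝ))
    hμ₀pos hδ₀pos hK hmlow hml hmu hdm hdc1 hdc1' hb1' hb1'' hb0 hb0 hbm' t k ht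
  have h11 := aux_decay γ δ₀ μ₀ K m (fun x => -(γ / 2 - m x)) (fun x => γ / 2 + m x)
    m' m' m' hμ₀pos hδ₀pos hK hmlow hml hmu hdm hdb00 hda00 hb2 hb1 hbm' hbm' hbm' t k ht
  fin_cases i <;> fin_cases j <;>
    simp only [Fin.zero_eta, Fin.mk_one, Fin.isValue]
  · refine ⟨?_, ?_, ?_⟩
    · rw [hentry t k]; simpa using h00.1
    · have he : (fun s => Ahat ω γ s k 0 0) = fun s => (2 * m k)⁻¹ *
          ((γ / 2 + m k) * Real.exp (-(s * (γ / 2 - m k))) +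
            -(γ / 2 - m k) * Real.exp (-(s * (γ / 2 + m k)))) := by
        funext s; rw [hentry s k]; simp
      rw [he]; simpa using h00.2.1
    · have he : (fun x => Ahat ω γ t x 0 0) = fun x => (2 * m x)⁻¹ *
          ((γ / 2 + m x) * Real.exp (-(t * (γ / 2 - m x))) +
            -(γ / 2 - m x) * Real.exp (-(t * (γ / 2 + m x)))) := by
        funext x; rw [hentry t x]; simp
      rw [he]; simpa using h00.2.2
  · refine ⟨?_, ?_, ?_⟩
    · rw [hentry t k]; simpa using h01.1
    · have he : (fun s => Ahat ω γ s k 0 1) = fun s => (2 * m k)⁻¹ *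
          (-(ω k ^ 2) * Real.exp (-(s * (γ / 2 - m k))) +
            ω k ^ 2 * Real.exp (-(s * (γ / 2 + m k)))) := by
        funext s; rw [hentry s k]; simp
      rw [he]; simpa using h01.2.1
    · have he : (fun x => Ahat ω γ t x 0 1) = fun x => (2 * m x)⁻¹ *
          (-(ω x ^ 2) * Real.exp (-(t * (γ / 2 - m x))) +
            ω x ^ 2 * Real.exp (-(t * (γ / 2 + m x)))) := by
        funext x; rw [hentry t x]; simp
      rw [he]; simpa using h01.2.2
  · refine ⟨?_, ?_, ?_⟩
    · rw [hentry t k]; simpa using h10.1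
    · have he : (fun s => Ahat ω γ s k 1 0) = fun s => (2 * m k)⁻¹ *
          (1 * Real.exp (-(s * (γ / 2 - m k))) +
            -1 * Real.exp (-(s * (γ / 2 + m k)))) := by
        funext s; rw [hentry s k]; simp
      rw [he]; simpa using h10.2.1
    · have he : (fun x => Ahat ω γ t x 1 0) = fun x => (2 * m x)⁻¹ *
          (1 * Real.exp (-(t * (γ / 2 - m x))) +
            -1 * Real.exp (-(t * (γ / 2 + m x)))) := by
        funext x; rw [hentry t x]; simp
      rw [he]; simpa using h10.2.2
  · refine ⟨?_, ?_, ?_⟩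
    · rw [hentry t k]; simpa using h11.1
    · have he : (fun s => Ahat ω γ s k 1 1) = fun s => (2 * m k)⁻¹ *
          (-(γ / 2 - m k) * Real.exp (-(s * (γ / 2 - m k))) +
            (γ / 2 + m k) * Real.exp (-(s * (γ / 2 + m k)))) := by
        funext s; rw [hentry s k]; simp
      rw [he]; simpa using h11.2.1
    · have he : (fun x => Ahat ω γ t x 1 1) = fun x => (2 * m x)⁻¹ *
          (-(γ / 2 - m x) * Real.exp (-(t * (γ / 2 - m x))) +
            (γ / 2 + m x) * Real.exp (-(t * (γ / 2 + m x)))) := by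
        funext x; rw [hentry t x]; simp
      rw [he]; simpa using h11.2.2
end

section
/- Let ω: ℝ → (0,∞) be differentiable at a point k, and let γ > 2ω(k) hold on a neighbourhood of k. Define Ω(k) := (γ/2)√(1 − (2ω(k)/γ)²) and Â_t(k) := exp(−t M̂_γ(k)) with M̂_γ(k) = [[0, ω(k)²], [−1, γ]], so that Â_t(k)^{22} = (e^{−γt/2}/Ω)(−(γ/2) sinh(Ωt) + Ω cosh(Ωt)) and Â_t(k)^{21} = (e^{−γt/2}/Ω) sinh(Ωt). Then 2γ ∫₀^∞ dt Â_t(k)^{22} ∂_k Â_t(k)^{21} = ∂_k ω(k) / (γ ω(k)). -/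
/-!
Write `−t M̂ = −(γt/2)·1 + t N` with `N = [[γ/2, −ω²], [1, −γ/2]]`. Since `N` is traceless,
`N² = Ω²·1`, so splitting the exponential series into even and odd terms gives
`Â_t = e^{−γt/2} (cosh(Ωt)·1 + (sinh(Ωt)/Ω) N)`. The entry `Â^{21}` depends on `k` only through
`Ω`, whose derivative is `−ωω'/Ω`, so the integrand is `−ωω'/Ω⁴` times a function of `(γ, Ω, t)`
alone. That function is a combination of `(α + βt) e^{−ct}` with `c ∈ {γ − 2Ω, γ, γ + 2Ω}`;
integrating termwise and using `γ² − 4Ω² = 4ω²` gives `ω'/(2γ²ω)`.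
-/

open Matrix MeasureTheory Real

open Set Filter Topology
open scoped Nat

open NormedSpace in
theorem exp_smul_eq_cosh_add_sinh_div {A : Type*} [Ring A] [Algebra ℝ A]
    [TopologicalSpace A] [IsTopologicalRing A] [ContinuousSMul ℝ A] [T2Space A]
    {x : A} {b : ℝ} (hb : b ≠ 0) (hx : x ^ 2 = b ^ 2 • (1 : A)) (t : ℝ) :
    exp (t • x) = cosh (b * t) • (1 : A) + (sinh (b * t) / b) • x := by
  have hpow (n : ℕ) : x ^ (2 * n) = b ^ (2 * n) • (1 : A) := by
    rw [pow_mul, hx, smul_pow, one_pow, pow_mul]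
  rw [exp_eq_tsum ℝ]
  refine HasSum.tsum_eq (HasSum.even_add_odd ?_ ?_)
  · convert (hasSum_cosh (b * t)).smul_const (1 : A) using 2 with n
    rw [smul_pow, hpow, smul_smul, smul_smul]
    congr 1
    ring
  · convert ((hasSum_sinh (b * t)).div_const b).smul_const x using 2 with n
    rw [smul_pow, pow_succ x, hpow, smul_one_mul, smul_smul, smul_smul]
    congr 1
    field_simp
    ring

theorem Matrix.exp_smul_one {n : Type*} [Fintype n] [DecidableEq n] (c : ℝ) :
    NormedSpace.exp (c • (1 : Matrix n n ℝ)) = Real.exp c • (1 : Matrix n n ℝ) := by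
  rw [smul_one_eq_diagonal, exp_diagonal, smul_one_eq_diagonal, Pi.exp_def, exp_eq_exp_ℝ]

theorem Matrix.traceless_fin_two_sq {R : Type*} [CommRing R] (a c d : R) :
    !![a, c; d, -a] ^ 2 = (a ^ 2 + c * d) • (1 : Matrix (Fin 2) (Fin 2) R) := by
  ext i j
  fin_cases i <;> fin_cases j <;> simp [sq, mul_apply, Fin.sum_univ_two] <;> ring

theorem neg_smul_Mhat_eq (ω : ℝ → ℝ) (γ t x : ℝ) :
    -(t • Mhat ω γ x) = (-(γ * t) / 2) • 1 + t • !![γ / 2, -ω x ^ 2; 1, -(γ / 2)] := by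
  ext i j
  fin_cases i <;> fin_cases j <;> simp [Mhat] <;> ring

theorem Ahat_eq {ω : ℝ → ℝ} {γ x b : ℝ} (hb : b ≠ 0) (hb2 : b ^ 2 = γ ^ 2 / 4 - ω x ^ 2)
    (t : ℝ) :
    Ahat ω γ t x = Real.exp (-(γ * t) / 2) •
      (cosh (b * t) • 1 + (sinh (b * t) / b) • !![γ / 2, -ω x ^ 2; 1, -(γ / 2)]) := by
  have hcomm : Commute ((-(γ * t) / 2) • (1 : Matrix (Fin 2) (Fin 2) ℝ))
      (t • !![γ / 2, -ω x ^ 2; 1, -(γ / 2)]) := (Commute.one_left _).smul_left _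
  have hN : !![γ / 2, -ω x ^ 2; 1, -(γ / 2)] ^ 2 = b ^ 2 • (1 : Matrix (Fin 2) (Fin 2) ℝ) := by
    rw [traceless_fin_two_sq, hb2]
    ring_nf
  rw [Ahat, neg_smul_Mhat_eq, exp_add_of_commute _ _ hcomm, exp_smul_one,
    exp_smul_eq_cosh_add_sinh_div hb hN, smul_one_mul]

theorem Ahat_one_one {ω : ℝ → ℝ} {γ x b : ℝ} (hb : b ≠ 0) (hb2 : b ^ 2 = γ ^ 2 / 4 - ω x ^ 2)
    (t : ℝ) :
    Ahat ω γ t x 1 1 = (Real.exp (-(γ * t) / 2) / b) *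
      (-(γ / 2) * sinh (b * t) + b * cosh (b * t)) := by
  rw [Ahat_eq hb hb2]
  simp only [smul_of, smul_cons, smul_eq_mul, Matrix.smul_empty, Matrix.smul_apply,
    Matrix.add_apply, one_apply_eq, of_apply, cons_val', cons_val_one, cons_val_fin_one]
  field_simp
  ring

theorem Ahat_one_zero {ω : ℝ → ℝ} {γ x b : ℝ} (hb : b ≠ 0) (hb2 : b ^ 2 = γ ^ 2 / 4 - ω x ^ 2)
    (t : ℝ) :
    Ahat ω γ t x 1 0 = (Real.exp (-(γ * t) / 2) / b) * sinh (b * t) := by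
  rw [Ahat_eq hb hb2]
  simp only [smul_of, smul_cons, smul_eq_mul, Matrix.smul_empty, Matrix.smul_apply,
    Matrix.add_apply, one_apply_ne one_ne_zero, of_apply, cons_val', cons_val_zero,
    cons_val_fin_one, cons_val_one, mul_zero, zero_add]
  field_simp

theorem one_sub_sq_div_pos {w γ : ℝ} (h : |2 * w| < γ) : 0 < 1 - (2 * w / γ) ^ 2 := by
  have hγ : 0 < γ := (abs_nonneg _).trans_lt h
  rw [sub_pos, sq_lt_one_iff_abs_lt_one, abs_div, abs_of_pos hγ, div_lt_one hγ]
  exact h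

theorem half_mul_sqrt_pos {w γ : ℝ} (h : |2 * w| < γ) : 0 < γ / 2 * √(1 - (2 * w / γ) ^ 2) :=
  mul_pos (by linarith [(abs_nonneg (2 * w)).trans_lt h]) (sqrt_pos.2 (one_sub_sq_div_pos h))

theorem half_mul_sqrt_sq {w γ : ℝ} (h : |2 * w| < γ) :
    (γ / 2 * √(1 - (2 * w / γ) ^ 2)) ^ 2 = γ ^ 2 / 4 - w ^ 2 := by
  have hγ : γ ≠ 0 := ((abs_nonneg _).trans_lt h).ne'
  rw [mul_pow, sq_sqrt (one_sub_sq_div_pos h).le]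
  field_simp
  ring

theorem HasDerivAt.half_mul_sqrt {f : ℝ → ℝ} {f' γ k : ℝ} (hf : HasDerivAt f f' k)
    (h : |2 * f k| < γ) :
    HasDerivAt (fun x => γ / 2 * √(1 - (2 * f x / γ) ^ 2))
      (-(f k * f') / (γ / 2 * √(1 - (2 * f k / γ) ^ 2))) k := by
  have hγ : γ ≠ 0 := ((abs_nonneg _).trans_lt h).ne'
  have hs : √(1 - (2 * f k / γ) ^ 2) ≠ 0 := (sqrt_pos.2 (one_sub_sq_div_pos h)).ne'
  refine ((((hf.const_mul 2).div_const γ).pow 2).const_sub 1 |>.sqrt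
    (one_sub_sq_div_pos h).ne' |>.const_mul (γ / 2)).congr_deriv ?_
  simp only [Pi.pow_apply]
  generalize √(1 - (2 * f k / γ) ^ 2) = s at hs ⊢
  norm_num
  field_simp

theorem HasDerivAt.sinh_mul_div {g : ℝ → ℝ} {g' k : ℝ} (hg : HasDerivAt g g' k) (hk : g k ≠ 0)
    (t : ℝ) :
    HasDerivAt (fun x => Real.sinh (g x * t) / g x)
      (g' * (t * g k * Real.cosh (g k * t) - Real.sinh (g k * t)) / g k ^ 2) k :=
  ((hg.mul_const t).sinh.div hg hk).congr_deriv (by ring)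

theorem hasDerivAt_Ahat_one_zero {ω Ω : ℝ → ℝ} {γ k Ω' : ℝ}
    (hΩ : ∀ᶠ x in 𝓝 k, Ω x ≠ 0 ∧ Ω x ^ 2 = γ ^ 2 / 4 - ω x ^ 2) (hΩ' : HasDerivAt Ω Ω' k)
    (t : ℝ) :
    HasDerivAt (fun x => Ahat ω γ t x 1 0)
      (exp (-(γ * t) / 2) * (Ω' * (t * Ω k * cosh (Ω k * t) - sinh (Ω k * t)) / Ω k ^ 2)) k := by
  have hev : (fun x => exp (-(γ * t) / 2) * (sinh (Ω x * t) / Ω x)) =ᶠ[𝓝 k]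
      fun x => Ahat ω γ t x 1 0 := by
    filter_upwards [hΩ] with x ⟨hx, hx2⟩
    rw [Ahat_one_zero hx hx2]
    ring
  exact ((hΩ'.sinh_mul_div hΩ.self_of_nhds.1 t).const_mul _).congr_of_eventuallyEq hev.symm

theorem Ahat_one_one_mul_deriv_Ahat_one_zero {ω Ω : ℝ → ℝ} {γ k Ω' : ℝ}
    (hΩ : ∀ᶠ x in 𝓝 k, Ω x ≠ 0 ∧ Ω x ^ 2 = γ ^ 2 / 4 - ω x ^ 2) (hΩ' : HasDerivAt Ω Ω' k)
    (t : ℝ) :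
    Ahat ω γ t k 1 1 * deriv (fun x => Ahat ω γ t x 1 0) k
      = Ω' / Ω k ^ 3 * (exp (-(γ * t)) *
        ((-(γ / 2) * sinh (Ω k * t) + Ω k * cosh (Ω k * t)) *
          (t * Ω k * cosh (Ω k * t) - sinh (Ω k * t)))) := by
  obtain ⟨hb, hb2⟩ := hΩ.self_of_nhds
  have hexp : exp (-(γ * t)) = exp (-(γ * t) / 2) * exp (-(γ * t) / 2) := by
    rw [← exp_add]
    ring_nf
  rw [Ahat_one_one hb hb2, (hasDerivAt_Ahat_one_zero hΩ hΩ' t).deriv, hexp]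
  field_simp

theorem integral_Ioi_pow_mul_exp_neg_mul (k : ℕ) {c : ℝ} (hc : 0 < c) :
    ∫ t in Ioi (0 : ℝ), t ^ k * exp (-(c * t)) = k ! / c ^ (k + 1) := by
  have key := integral_rpow_mul_exp_neg_mul_Ioi (a := k + 1) (by positivity) hc
  simp only [add_sub_cancel_right, rpow_natCast] at key
  rw [key, Gamma_nat_eq_factorial, ← Nat.cast_add_one, rpow_natCast]
  ring

theorem integrableOn_Ioi_pow_mul_exp_neg_mul (k : ℕ) {c : ℝ} (hc : 0 < c) :
    IntegrableOn (fun t : ℝ => t ^ k * exp (-(c * t))) (Ioi 0) :=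
  .of_integral_ne_zero (by rw [integral_Ioi_pow_mul_exp_neg_mul k hc]; positivity)

theorem linear_mul_exp_neg_mul_eq (α β c : ℝ) :
    (fun t : ℝ => (α + β * t) * exp (-(c * t)))
      = fun t => α * (t ^ 0 * exp (-(c * t))) + β * (t ^ 1 * exp (-(c * t))) := by
  ext t
  ring

theorem integrableOn_Ioi_linear_mul_exp_neg_mul (α β : ℝ) {c : ℝ} (hc : 0 < c) :
    IntegrableOn (fun t : ℝ => (α + β * t) * exp (-(c * t))) (Ioi 0) := by
  rw [linear_mul_exp_neg_mul_eq]
  exact ((integrableOn_Ioi_pow_mul_exp_neg_mul 0 hc).const_mul α).add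
    ((integrableOn_Ioi_pow_mul_exp_neg_mul 1 hc).const_mul β)

theorem integral_Ioi_linear_mul_exp_neg_mul (α β : ℝ) {c : ℝ} (hc : 0 < c) :
    ∫ t in Ioi (0 : ℝ), (α + β * t) * exp (-(c * t)) = α / c + β / c ^ 2 := by
  rw [linear_mul_exp_neg_mul_eq,
    integral_add ((integrableOn_Ioi_pow_mul_exp_neg_mul 0 hc).const_mul α)
      ((integrableOn_Ioi_pow_mul_exp_neg_mul 1 hc).const_mul β),
    integral_const_mul, integral_const_mul, integral_Ioi_pow_mul_exp_neg_mul 0 hc,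
    integral_Ioi_pow_mul_exp_neg_mul 1 hc]
  simp only [Nat.factorial, Nat.cast_one, zero_add, pow_one]
  ring

theorem exp_neg_mul_sinh_cosh_eq_sum_linear_mul_exp (γ b t : ℝ) :
    exp (-(γ * t)) * ((-(γ / 2) * sinh (b * t) + b * cosh (b * t)) *
        (t * b * cosh (b * t) - sinh (b * t)))
      = ((γ - 2 * b) / 8 + (-((γ - 2 * b) * b / 8)) * t) * exp (-((γ - 2 * b) * t))
        + (-(γ / 4) + b ^ 2 / 2 * t) * exp (-(γ * t))
        + ((γ + 2 * b) / 8 + (γ + 2 * b) * b / 8 * t) * exp (-((γ + 2 * b) * t)) := by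
  have hminus : exp (-((γ - 2 * b) * t)) = exp (-(γ * t)) * exp (b * t) ^ 2 := by
    rw [← exp_nat_mul, ← exp_add]
    ring_nf
  have hplus : exp (-((γ + 2 * b) * t)) = exp (-(γ * t)) * (exp (b * t))⁻¹ ^ 2 := by
    rw [← exp_neg, ← exp_nat_mul, ← exp_add]
    ring_nf
  rw [hminus, hplus, sinh_eq, cosh_eq, exp_neg (b * t)]
  field_simp
  ring

theorem integral_Ioi_exp_neg_mul_sinh_cosh {γ b : ℝ} (h : 2 * |b| < γ) :
    ∫ t in Ioi (0 : ℝ), exp (-(γ * t)) * ((-(γ / 2) * sinh (b * t) + b * cosh (b * t)) *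
        (t * b * cosh (b * t) - sinh (b * t)))
      = -(2 * b ^ 4) / (γ ^ 2 * (γ ^ 2 - 4 * b ^ 2)) := by
  have hp : 0 < γ - 2 * b := by linarith [le_abs_self b]
  have hq : 0 < γ + 2 * b := by linarith [neg_abs_le b]
  have hγ : 0 < γ := by linarith
  have i₁ := integrableOn_Ioi_linear_mul_exp_neg_mul ((γ - 2 * b) / 8) (-((γ - 2 * b) * b / 8)) hp
  have i₂ := integrableOn_Ioi_linear_mul_exp_neg_mul (-(γ / 4)) (b ^ 2 / 2) hγ
  have i₃ := integrableOn_Ioi_linear_mul_exp_neg_mul ((γ + 2 * b) / 8) ((γ + 2 * b) * b / 8) hq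
  have hsum := integral_add (i₁.add i₂) i₃
  simp only [Pi.add_apply] at hsum
  simp_rw [exp_neg_mul_sinh_cosh_eq_sum_linear_mul_exp]
  rw [hsum, integral_add i₁ i₂, integral_Ioi_linear_mul_exp_neg_mul _ _ hp,
    integral_Ioi_linear_mul_exp_neg_mul _ _ hγ, integral_Ioi_linear_mul_exp_neg_mul _ _ hq,
    show γ ^ 2 - 4 * b ^ 2 = (γ - 2 * b) * (γ + 2 * b) by ring]
  field_simp
  ring

/-- With `Ω(k) = (γ/2)√(1 − (2ω(k)/γ)²)` one has the explicit entries
`Â_t(k)^{22}`, `Â_t(k)^{21}`, and the identity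
`2γ ∫₀^∞ Â_t(k)^{22} ∂_k Â_t(k)^{21} dt = ω'(k) / (γ ω(k))`. -/
theorem q_of_k_explicit
    (ω : ℝ → ℝ) (γ : ℝ) (k : ℝ)
    (hpos : ∀ x, 0 < ω x)
    (hdiff : DifferentiableAt ℝ ω k)
    (hγ : ∀ᶠ x in nhds k, 2 * ω x < γ)
    (Ω : ℝ → ℝ) (hΩ : ∀ x, Ω x = (γ / 2) * Real.sqrt (1 - (2 * ω x / γ) ^ 2)) :
    (∀ t : ℝ, 0 ≤ t →
        Ahat ω γ t k 1 1
          = (Real.exp (-(γ * t) / 2) / Ω k) *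
              (-(γ / 2) * Real.sinh (Ω k * t) + Ω k * Real.cosh (Ω k * t)) ∧
        Ahat ω γ t k 1 0
          = (Real.exp (-(γ * t) / 2) / Ω k) * Real.sinh (Ω k * t)) ∧
    2 * γ * ∫ t in Set.Ioi (0:ℝ),
        Ahat ω γ t k 1 1 * deriv (fun x => Ahat ω γ t x 1 0) k
      = deriv ω k / (γ * ω k) := by
  have hnear : ∀ᶠ x in 𝓝 k, |2 * ω x| < γ :=
    hγ.mono fun x hx => by rwa [abs_of_pos (mul_pos two_pos (hpos x))]
  have hΩnear : ∀ᶠ x in 𝓝 k, Ω x ≠ 0 ∧ Ω x ^ 2 = γ ^ 2 / 4 - ω x ^ 2 :=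
    hnear.mono fun x hx => ⟨hΩ x ▸ (half_mul_sqrt_pos hx).ne', hΩ x ▸ half_mul_sqrt_sq hx⟩
  have hk := hnear.self_of_nhds
  have hb : 0 < Ω k := hΩ k ▸ half_mul_sqrt_pos hk
  have hb2 : Ω k ^ 2 = γ ^ 2 / 4 - ω k ^ 2 := hΩ k ▸ half_mul_sqrt_sq hk
  refine ⟨fun t _ => ⟨Ahat_one_one hb.ne' hb2 t, Ahat_one_zero hb.ne' hb2 t⟩, ?_⟩
  have hΩ' : HasDerivAt Ω (-(ω k * deriv ω k) / Ω k) k := by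
    rw [funext hΩ]
    exact hdiff.hasDerivAt.half_mul_sqrt hk
  have h2b : 2 * |Ω k| < γ := by
    rw [abs_of_pos hb]
    nlinarith [hpos k, (abs_nonneg _).trans_lt hk]
  simp_rw [Ahat_one_one_mul_deriv_Ahat_one_zero hΩnear hΩ']
  rw [integral_const_mul, integral_Ioi_exp_neg_mul_sinh_cosh h2b,
    show γ ^ 2 - 4 * Ω k ^ 2 = 4 * ω k ^ 2 by rw [hb2]; ring]
  have hω := (hpos k).ne'
  field_simp
  ring
end

section
/- Let ω > 0 and γ > 2ω be real numbers, let Â_t := exp(−t M̂_γ) with M̂_γ = [[0, ω²], [−1, γ]], and let P⁽²⁾ := diag(0,1). Then 2γ ∫₀^∞ dt Â_t^⊤ P⁽²⁾ Â_t = [[ω^{−2}, 0], [0, 1]]. -/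
/-!
Write `γ = l + m` and `ω² = l m` with distinct `l, m > 0`, possible because `γ > 2ω > 0`.
Then `M̂_γ` has the distinct eigenvalues `l, m`, so `M̂_γ = S diag(l, m) S⁻¹` and
`Âₜ = S diag(e^{-lt}, e^{-mt}) S⁻¹`. Since the second row of `S` is `(1, 1)`,
`Sᵀ P⁽²⁾ S` is the all-ones matrix, hence `Âₜᵀ P⁽²⁾ Âₜ = S⁻ᵀ (e^{-(νₖ + ν_k')t})ₖₖ' S⁻¹`
with `ν = (l, m)`. Integrating entrywise gives `S⁻ᵀ C S⁻¹` for the Cauchy matrix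
`C = (1 / (νₖ + ν_k'))`, and `2 (l + m) S⁻ᵀ C S⁻¹ = diag(1 / (l m), 1)` is a direct computation.
-/

open Matrix MeasureTheory Set

lemma integral_exp_neg_mul_Ioi_zero {c : ℝ} (hc : 0 < c) :
    ∫ t in Ioi (0 : ℝ), Real.exp (-c * t) = c⁻¹ := by
  rw [integral_exp_mul_Ioi (neg_neg_of_pos hc)]
  simp

lemma Matrix.exp_neg_smul_conj_diagonal {n : Type*} [Fintype n] [DecidableEq n]
    {S T : Matrix n n ℝ} (hST : S * T = 1) (ν : n → ℝ) (t : ℝ) :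
    NormedSpace.exp (-(t • (S * diagonal ν * T))) =
      S * diagonal (fun k => Real.exp (-t * ν k)) * T := by
  obtain rfl : T = S⁻¹ := (inv_eq_right_inv hST).symm
  have hS : IsUnit S := (isUnit_iff_isUnit_det S).mpr (isUnit_det_of_right_inverse hST)
  have hconj : -(t • (S * diagonal ν * S⁻¹)) = S * diagonal (-t • ν) * S⁻¹ := by
    rw [← neg_smul, diagonal_smul, mul_smul_comm, smul_mul_assoc]
  rw [hconj, exp_conj _ _ hS, exp_diagonal, Pi.exp_def]
  simp [Real.exp_eq_exp_ℝ]

lemma Matrix.integral_mul_of_mul_apply {n : Type*} [Fintype n] {μ : Measure ℝ}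
    (A B : Matrix n n ℝ) (K : ℝ → n → n → ℝ) (hK : ∀ k l, Integrable (fun t => K t k l) μ)
    (i j : n) :
    ∫ t, (A * of (K t) * B) i j ∂μ = (A * of (fun k l => ∫ t, K t k l ∂μ) * B) i j := by
  simp only [mul_apply, of_apply]
  rw [integral_finsetSum]
  · refine Finset.sum_congr rfl fun l _ => ?_
    rw [integral_mul_const, integral_finsetSum]
    · simp_rw [integral_const_mul]
    · exact fun k _ => (hK k l).const_mul _
  · exact fun l _ => (integrable_finsetSum _ fun k _ => (hK k l).const_mul _).mul_const _

lemma exists_pos_roots_of_two_mul_lt {ω γ : ℝ} (hω : 0 < ω) (hγ : 2 * ω < γ) :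
    ∃ l m : ℝ, 0 < l ∧ 0 < m ∧ l ≠ m ∧ l + m = γ ∧ l * m = ω ^ 2 := by
  have hdisc : 0 < γ ^ 2 - 4 * ω ^ 2 := by nlinarith
  set d := √(γ ^ 2 - 4 * ω ^ 2)
  have hd : 0 < d := Real.sqrt_pos.mpr hdisc
  have hd2 : d ^ 2 = γ ^ 2 - 4 * ω ^ 2 := Real.sq_sqrt hdisc.le
  refine ⟨(γ - d) / 2, (γ + d) / 2, ?_, by linarith, by linarith, by ring,
    by linear_combination -hd2 / 4⟩
  nlinarith

section Companion

variable {l m : ℝ}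

/-- The matrix `M̂_γ` of the statement, with `γ = l + m` and `ω² = l m`. -/
def companion (l m : ℝ) : Matrix (Fin 2) (Fin 2) ℝ := !![0, l * m; -1, l + m]

/-- The columns `(m, 1)` and `(l, 1)` are eigenvectors of `companion l m` for `l` and `m`. -/
def companionEigenbasis (l m : ℝ) : Matrix (Fin 2) (Fin 2) ℝ := !![m, l; 1, 1]

noncomputable def companionEigenbasisInv (l m : ℝ) : Matrix (Fin 2) (Fin 2) ℝ :=
  (m - l)⁻¹ • !![1, -l; -1, m]

lemma companionEigenbasis_mul_inv (hlm : l ≠ m) :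
    companionEigenbasis l m * companionEigenbasisInv l m = 1 := by
  have : m - l ≠ 0 := sub_ne_zero.mpr hlm.symm
  ext i j; fin_cases i <;> fin_cases j <;>
    simp [companionEigenbasis, companionEigenbasisInv, mul_apply, Fin.sum_univ_two] <;>
    field_simp <;> ring

lemma companion_eq_conj_diagonal (hlm : l ≠ m) :
    companion l m =
      companionEigenbasis l m * diagonal ![l, m] * companionEigenbasisInv l m := by
  have : m - l ≠ 0 := sub_ne_zero.mpr hlm.symm
  ext i j; fin_cases i <;> fin_cases j <;>
    simp [companion, companionEigenbasis, companionEigenbasisInv, mul_apply, Fin.sum_univ_two,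
      vecMul_diagonal] <;> field_simp <;> ring

lemma companionEigenbasis_transpose_mul_mul :
    (companionEigenbasis l m)ᵀ * !![0, 0; 0, 1] * companionEigenbasis l m = of fun _ _ => 1 := by
  ext i j; fin_cases i <;> fin_cases j <;> simp [companionEigenbasis, mul_apply, Fin.sum_univ_two]

lemma smul_companionEigenbasisInv_transpose_mul_cauchy_mul (hl : 0 < l) (hm : 0 < m)
    (hlm : l ≠ m) :
    (2 * (l + m)) • ((companionEigenbasisInv l m)ᵀ *
      of (fun k k' => (![l, m] k + ![l, m] k')⁻¹) * companionEigenbasisInv l m) =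
      !![1 / (l * m), 0; 0, 1] := by
  have : m - l ≠ 0 := sub_ne_zero.mpr hlm.symm
  ext i j; fin_cases i <;> fin_cases j <;>
    simp [companionEigenbasisInv, mul_apply, Fin.sum_univ_two, (add_pos hl hm).ne'] <;>
    field_simp <;> ring

theorem two_mul_integral_companion_gram (hl : 0 < l) (hm : 0 < m) (hlm : l ≠ m) (i j : Fin 2) :
    2 * (l + m) * ∫ t in Ioi (0 : ℝ),
        ((NormedSpace.exp (-(t • companion l m)))ᵀ * !![0, 0; 0, 1] *
          NormedSpace.exp (-(t • companion l m)) : Matrix (Fin 2) (Fin 2) ℝ) i j =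
      (!![1 / (l * m), 0; 0, 1] : Matrix (Fin 2) (Fin 2) ℝ) i j := by
  set S := companionEigenbasis l m
  set T := companionEigenbasisInv l m
  set ν : Fin 2 → ℝ := ![l, m]
  have hν : ∀ k, 0 < ν k := Fin.forall_fin_two.mpr ⟨hl, hm⟩
  have hexp (t : ℝ) : NormedSpace.exp (-(t • companion l m)) =
      S * diagonal (fun k => Real.exp (-t * ν k)) * T := by
    rw [companion_eq_conj_diagonal hlm]
    exact exp_neg_smul_conj_diagonal (companionEigenbasis_mul_inv hlm) ν t
  have hgram (t : ℝ) : (NormedSpace.exp (-(t • companion l m)))ᵀ * !![0, 0; 0, 1] *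
      NormedSpace.exp (-(t • companion l m)) =
      Tᵀ * of (fun k k' => Real.exp (-(ν k + ν k') * t)) * T := by
    calc _ = Tᵀ * (diagonal (fun k => Real.exp (-t * ν k)) * (Sᵀ * !![0, 0; 0, 1] * S) *
          diagonal (fun k => Real.exp (-t * ν k))) * T := by
          simp only [hexp, transpose_mul, diagonal_transpose, Matrix.mul_assoc]
      _ = _ := by
          rw [companionEigenbasis_transpose_mul_mul]
          congr 2
          ext k k'
          simp only [diagonal_mul, mul_diagonal, of_apply, mul_one, ← Real.exp_add]
          ring_nf
  have hintegral : of (fun k k' => ∫ t in Ioi (0 : ℝ), Real.exp (-(ν k + ν k') * t)) =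
      of fun k k' => (ν k + ν k')⁻¹ := by
    ext k k'
    exact integral_exp_neg_mul_Ioi_zero (add_pos (hν k) (hν k'))
  simp_rw [hgram]
  rw [integral_mul_of_mul_apply Tᵀ T (fun t k k' => Real.exp (-(ν k + ν k') * t))
    (fun k k' => exp_neg_integrableOn_Ioi 0 (add_pos (hν k) (hν k'))), hintegral, ← smul_eq_mul,
    ← Matrix.smul_apply, smul_companionEigenbasisInv_transpose_mul_cauchy_mul hl hm hlm]

end Companion

/-- `2γ ∫₀^∞ Âₜᵀ P⁽²⁾ Âₜ dt = diag(ω^{-2}, 1)` for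
`Âₜ = exp(−t M̂_γ)`, `M̂_γ = [[0, ω²], [−1, γ]]`, `P⁽²⁾ = diag(0,1)`. -/
theorem integral_AtT_P2_At
    (ω γ : ℝ) (hω : 0 < ω) (hγ : 2 * ω < γ)
    (M P : Matrix (Fin 2) (Fin 2) ℝ)
    (hM : M = !![0, ω ^ 2; -1, γ]) (hP : P = !![0, 0; 0, 1]) :
    ∀ i j : Fin 2,
      2 * γ * ∫ t in Set.Ioi (0:ℝ),
          ((NormedSpace.exp (-(t • M)))ᵀ * P * NormedSpace.exp (-(t • M))) i j
        = (!![1 / ω ^ 2, 0; 0, 1] : Matrix (Fin 2) (Fin 2) ℝ) i j := by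
  obtain ⟨l, m, hl, hm, hlm, rfl, hprod⟩ := exists_pos_roots_of_two_mul_lt hω hγ
  subst hM hP
  rw [← hprod]
  exact two_mul_integral_companion_gram hl hm hlm
end

section
/- Let L ∈ ℕ and f: Λ_L → ℂ, with discrete Fourier transform f̂(q) = Σ_{x∈Λ_L} f(x) e^{−2πiq·x} for q ∈ Λ_L* ⊂ (−1/2,1/2]. Define the discrete gradient ∇f(x) := f(x+1) − f(x) and the first-order Taylor remainder 𝓡(f; x, y) := f(x+y) − f(x) − y ∇f(x), where x, y ∈ Λ_L with periodic arithmetic and y is identified with its integer representative. Then for all x, y ∈ Λ_L: |𝓡(f; x, y)| ≤ 4π² y² · L^{−1} Σ_{q∈Λ_L*} q² |f̂(q)|, and also |𝓡(f; x, y)| ≤ 4 |y| · sup_{x'∈Λ_L} |f(x')|. -/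
/-!
Identifying `Λ_L` with `ZMod L` turns `dft` into Mathlib's `ZMod.dft`, so Fourier inversion writes
the remainder as `L⁻¹ Σ_q f̂(q) e^{2πiqx} (z_q ^ y - 1 - y (z_q - 1))` with `z_q = e^{2πiq}`.
For a unit `z`, the increments in `n` of `z ^ n - 1 - n (z - 1)` are `(z ^ n - 1) (z - 1)` and
`‖z ^ n - 1‖ ≤ |n| ‖z - 1‖`, whence `‖z ^ y - 1 - y (z - 1)‖ ≤ y² ‖z - 1‖²`; together with
`‖z_q - 1‖ ≤ 2π|q|` this gives the first bound. The second is the triangle inequality.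
-/

open Real Complex

/-- The discrete circle of `L` sites, represented by integers:
`{−(L−1)/2, …, (L−1)/2}` for odd `L` and `{−L/2+1, …, L/2}` for even `L`. -/
noncomputable def Lambda (L : ℕ) : Finset ℤ := Finset.Ioc ((L : ℤ) / 2 - L) ((L : ℤ) / 2)

/-- Periodic reduction `[x]_L`: the representative of `x mod L` lying in `Λ_L`. -/
def wrap (L : ℕ) (x : ℤ) : ℤ :=
  (x - ((L : ℤ) / 2 - L + 1)) % L + ((L : ℤ) / 2 - L + 1)

/-- Discrete Fourier transform `f̂(q) = Σ_{x∈Λ_L} f(x) e^{−2πiq·x}`, `q = p/L`, `p ∈ Λ_L`. -/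
noncomputable def dft (L : ℕ) (f : ℤ → ℂ) (p : ℤ) : ℂ :=
  ∑ x ∈ Lambda L, f x * Complex.exp (-(2 * π * ((p : ℝ) / L) * x) * Complex.I)

/-- The discrete gradient `∇f(x) = f(x+1) − f(x)` (with periodic arithmetic). -/
noncomputable def dGrad (L : ℕ) (f : ℤ → ℂ) (x : ℤ) : ℂ := f (wrap L (x + 1)) - f x

/-- The first-order discrete Taylor remainder `𝓡(f;x,y) = f(x+y) − f(x) − y∇f(x)`. -/
noncomputable def taylorRem (L : ℕ) (f : ℤ → ℂ) (x y : ℤ) : ℂ :=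
  f (wrap L (x + y)) - f x - (y : ℂ) * dGrad L f x

section UnitNorm

variable {𝕜 : Type*} [NormedDivisionRing 𝕜] {z : 𝕜}

lemma norm_zpow_sub_one_le (hz : ‖z‖ = 1) (n : ℤ) : ‖z ^ n - 1‖ ≤ |n| * ‖z - 1‖ := by
  have hz0 : z ≠ 0 := norm_ne_zero_iff.mp (by rw [hz]; exact one_ne_zero)
  induction n using Int.induction_on with
  | zero => simp
  | succ i ih =>
    have hstep : z ^ ((i : ℤ) + 1) - 1 = z ^ (i : ℤ) * (z - 1) + (z ^ (i : ℤ) - 1) := by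
      rw [zpow_add_one₀ hz0, mul_sub, mul_one]; abel
    calc ‖z ^ ((i : ℤ) + 1) - 1‖ ≤ ‖z - 1‖ + |(i : ℤ)| * ‖z - 1‖ := by
          rw [hstep]
          refine (norm_add_le _ _).trans (add_le_add ?_ ih)
          rw [norm_mul, norm_zpow, hz, one_zpow, one_mul]
      _ = |(i : ℤ) + 1| * ‖z - 1‖ := by
          push_cast [abs_of_nonneg (by positivity : (0 : ℤ) ≤ i),
            abs_of_nonneg (by positivity : (0 : ℤ) ≤ i + 1)]
          ring
  | pred i ih =>
    have hstep : z ^ (-(i : ℤ) - 1) - 1 = z ^ (-(i : ℤ) - 1) * (1 - z) + (z ^ (-(i : ℤ)) - 1) := by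
      rw [mul_sub, mul_one, ← zpow_add_one₀ hz0, sub_add_cancel]; abel
    calc ‖z ^ (-(i : ℤ) - 1) - 1‖ ≤ ‖z - 1‖ + |-(i : ℤ)| * ‖z - 1‖ := by
          rw [hstep]
          refine (norm_add_le _ _).trans (add_le_add ?_ ih)
          rw [norm_mul, norm_zpow, hz, one_zpow, one_mul, norm_sub_rev]
      _ = |-(i : ℤ) - 1| * ‖z - 1‖ := by
          rw [abs_neg, ← neg_add', abs_neg]
          push_cast [abs_of_nonneg (by positivity : (0 : ℤ) ≤ i),
            abs_of_nonneg (by positivity : (0 : ℤ) ≤ i + 1)]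
          ring

lemma norm_zpow_sub_one_sub_mul_le (hz : ‖z‖ = 1) (n : ℤ) :
    ‖z ^ n - 1 - n * (z - 1)‖ ≤ (n : ℝ) ^ 2 * ‖z - 1‖ ^ 2 := by
  have hz0 : z ≠ 0 := norm_ne_zero_iff.mp (by rw [hz]; exact one_ne_zero)
  induction n using Int.induction_on with
  | zero => simp
  | succ i ih =>
    have hstep : z ^ ((i : ℤ) + 1) - 1 - ((i + 1 : ℤ) : 𝕜) * (z - 1)
        = (z ^ (i : ℤ) - 1 - (i : ℤ) * (z - 1)) + (z ^ (i : ℤ) - 1) * (z - 1) := by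
      rw [zpow_add_one₀ hz0]; push_cast; noncomm_ring
    calc _ ≤ ((i : ℤ) : ℝ) ^ 2 * ‖z - 1‖ ^ 2 + |(i : ℤ)| * ‖z - 1‖ * ‖z - 1‖ := by
          rw [hstep]
          refine (norm_add_le _ _).trans (add_le_add ih ?_)
          rw [norm_mul]
          exact mul_le_mul_of_nonneg_right (norm_zpow_sub_one_le hz _) (norm_nonneg _)
      _ ≤ (((i : ℤ) + 1 : ℤ) : ℝ) ^ 2 * ‖z - 1‖ ^ 2 := by
          push_cast [abs_of_nonneg (by positivity : (0 : ℤ) ≤ i)]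
          nlinarith [sq_nonneg ‖z - 1‖]
  | pred i ih =>
    have hstep : z ^ (-(i : ℤ) - 1) - 1 - ((-(i : ℤ) - 1 : ℤ) : 𝕜) * (z - 1)
        = (z ^ (-(i : ℤ)) - 1 - (-(i : ℤ) : ℤ) * (z - 1)) - (z ^ (-(i : ℤ) - 1) - 1) * (z - 1) := by
      have : z ^ (-(i : ℤ)) = z ^ (-(i : ℤ) - 1) * z := by rw [← zpow_add_one₀ hz0, sub_add_cancel]
      rw [this]; push_cast; noncomm_ring
    calc _ ≤ ((-(i : ℤ) : ℤ) : ℝ) ^ 2 * ‖z - 1‖ ^ 2 + |-(i : ℤ) - 1| * ‖z - 1‖ * ‖z - 1‖ := by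
          rw [hstep]
          refine (norm_sub_le _ _).trans (add_le_add ih ?_)
          rw [norm_mul]
          exact mul_le_mul_of_nonneg_right (norm_zpow_sub_one_le hz _) (norm_nonneg _)
      _ ≤ ((-(i : ℤ) - 1 : ℤ) : ℝ) ^ 2 * ‖z - 1‖ ^ 2 := by
          rw [← neg_add', abs_neg]
          push_cast [abs_of_nonneg (by positivity : (0 : ℤ) ≤ i + 1)]
          nlinarith [sq_nonneg ‖z - 1‖]

end UnitNorm

section Lattice

variable {L : ℕ}

lemma wrap_mem [NeZero L] (z : ℤ) : wrap L z ∈ Lambda L := by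
  have hL : (0 : ℤ) < L := by exact_mod_cast Nat.pos_of_neZero L
  have h₁ := Int.emod_nonneg (z - ((L : ℤ) / 2 - L + 1)) hL.ne'
  have h₂ := Int.emod_lt_of_pos (z - ((L : ℤ) / 2 - L + 1)) hL
  simp only [Lambda, wrap, Finset.mem_Ioc]
  omega

lemma intCast_wrap (z : ℤ) : ((wrap L z : ℤ) : ZMod L) = z := by
  simp [wrap, ZMod.intCast_mod]

lemma injOn_intCast_Lambda : Set.InjOn (Int.cast : ℤ → ZMod L) (Lambda L) := by
  intro a ha b hb hab
  simp only [Finset.coe_Ioc, Set.mem_Ioc, Lambda] at ha hb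
  have hdvd := (ZMod.intCast_eq_intCast_iff_dvd_sub a b L).mp hab
  have := Int.eq_zero_of_abs_lt_dvd hdvd (abs_lt.mpr ⟨by omega, by omega⟩)
  omega

lemma wrap_eq_self [NeZero L] {x : ℤ} (hx : x ∈ Lambda L) : wrap L x = x :=
  injOn_intCast_Lambda (wrap_mem x) hx (intCast_wrap x)

lemma wrap_val_intCast [NeZero L] {x : ℤ} (hx : x ∈ Lambda L) :
    wrap L (x : ZMod L).val = x :=
  injOn_intCast_Lambda (wrap_mem _) hx (by simp [intCast_wrap])

lemma sum_Lambda_intCast [NeZero L] {M : Type*} [AddCommMonoid M] (g : ZMod L → M) :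
    ∑ x ∈ Lambda L, g x = ∑ a, g a :=
  Finset.sum_nbij' Int.cast (fun a => wrap L a.val) (fun _ _ => Finset.mem_univ _)
    (fun _ _ => wrap_mem _) (fun _ hx => wrap_val_intCast hx) (fun a _ => by simp [intCast_wrap])
    (fun _ _ => rfl)

end Lattice

open scoped ZMod

namespace ZMod

variable {N : ℕ} [NeZero N]

lemma norm_stdAddChar (j : ZMod N) : ‖stdAddChar j‖ = 1 :=
  Circle.norm_coe _

lemma sub_sub_mul_sub_eq_sum_dft (Φ : ZMod N → ℂ) (a : ZMod N) (y : ℤ) :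
    Φ (a + y) - Φ a - y * (Φ (a + 1) - Φ a) =
      (N : ℂ)⁻¹ * ∑ j, 𝓕 Φ j * stdAddChar (j * a) *
        (stdAddChar j ^ y - 1 - y * (stdAddChar j - 1)) := by
  have inv : ∀ b, Φ b = (N : ℂ)⁻¹ * ∑ j, stdAddChar (j * b) * 𝓕 Φ j := fun b => by
    conv_lhs => rw [← dft.symm_apply_apply Φ]
    simp [invDFT_apply, smul_eq_mul]
  have shift : ∀ j (n : ℤ), stdAddChar (j * (a + (n : ZMod N))) =
      stdAddChar (j * a) * stdAddChar j ^ n := fun j n => by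
    rw [mul_add, AddChar.map_add_eq_mul, mul_comm j (n : ZMod N), ← zsmul_eq_mul,
      AddChar.map_zsmul_eq_zpow]
  have shift1 := fun j => shift j 1
  simp only [Int.cast_one, zpow_one] at shift1
  simp only [inv, shift, shift1, mul_sub, Finset.mul_sum, ← Finset.sum_sub_distrib]
  refine Finset.sum_congr rfl fun j _ => ?_
  ring

lemma norm_sub_sub_mul_sub_le_sum_dft (Φ : ZMod N → ℂ) (a : ZMod N) (y : ℤ) :
    ‖Φ (a + y) - Φ a - y * (Φ (a + 1) - Φ a)‖ ≤
      (N : ℝ)⁻¹ * ∑ j, ‖𝓕 Φ j‖ * ((y : ℝ) ^ 2 * ‖stdAddChar j - 1‖ ^ 2) := by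
  rw [sub_sub_mul_sub_eq_sum_dft, norm_mul, norm_inv, Complex.norm_natCast]
  gcongr
  refine (norm_sum_le _ _).trans (Finset.sum_le_sum fun j _ => ?_)
  rw [norm_mul, norm_mul, norm_stdAddChar, mul_one]
  gcongr
  exact norm_zpow_sub_one_sub_mul_le (norm_stdAddChar j) y

lemma norm_stdAddChar_intCast_sub_one_le (p : ℤ) :
    ‖stdAddChar (p : ZMod N) - 1‖ ≤ 2 * π * |(p : ℝ)| / N := by
  have h := Real.norm_exp_I_mul_ofReal_sub_one_le (x := 2 * π * p / N)
  rw [stdAddChar_coe]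
  convert h using 3
  · push_cast; ring_nf
  · rw [Real.norm_eq_abs, abs_div, abs_mul, abs_mul, abs_of_pos Real.pi_pos, Nat.abs_cast]
    norm_num

end ZMod

/-- `f` on `Λ_L`, seen as a function on `ℤ/Lℤ`. -/
def restrictZMod (L : ℕ) (f : ℤ → ℂ) (a : ZMod L) : ℂ := f (wrap L a.val)

section Lambda

variable {L : ℕ} [NeZero L] (f : ℤ → ℂ)

lemma restrictZMod_intCast (z : ℤ) : restrictZMod L f z = f (wrap L z) :=
  congrArg f <| injOn_intCast_Lambda (wrap_mem _) (wrap_mem _) (by simp [intCast_wrap])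

lemma restrictZMod_intCast_of_mem {x : ℤ} (hx : x ∈ Lambda L) : restrictZMod L f x = f x := by
  rw [restrictZMod_intCast, wrap_eq_self hx]

lemma dft_eq_dft_restrictZMod (p : ℤ) : dft L f p = 𝓕 (restrictZMod L f) p := by
  rw [ZMod.dft_apply, dft, ← sum_Lambda_intCast]
  refine Finset.sum_congr rfl fun x hx => ?_
  rw [restrictZMod_intCast_of_mem f hx, smul_eq_mul, mul_comm, ← Int.cast_mul, ← Int.cast_neg,
    ZMod.stdAddChar_coe]
  congr 2
  push_cast
  ring

lemma taylorRem_eq_restrictZMod {x : ℤ} (hx : x ∈ Lambda L) (y : ℤ) :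
    taylorRem L f x y = restrictZMod L f (x + y) - restrictZMod L f x
      - y * (restrictZMod L f (x + 1) - restrictZMod L f x) := by
  rw [taylorRem, dGrad, ← restrictZMod_intCast f, ← restrictZMod_intCast f,
    ← restrictZMod_intCast_of_mem f hx]
  push_cast
  ring

lemma norm_taylorRem_le_fourier {x : ℤ} (hx : x ∈ Lambda L) (y : ℤ) :
    ‖taylorRem L f x y‖ ≤ 4 * π ^ 2 * (y : ℝ) ^ 2 *
      ((L : ℝ)⁻¹ * ∑ p ∈ Lambda L, ((p : ℝ) / L) ^ 2 * ‖dft L f p‖) := by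
  rw [taylorRem_eq_restrictZMod f hx]
  refine (ZMod.norm_sub_sub_mul_sub_le_sum_dft _ _ y).trans ?_
  calc _ ≤ (L : ℝ)⁻¹ * ∑ p ∈ Lambda L,
          ‖dft L f p‖ * ((y : ℝ) ^ 2 * (2 * π * |(p : ℝ)| / L) ^ 2) := by
        rw [← sum_Lambda_intCast]
        refine mul_le_mul_of_nonneg_left (Finset.sum_le_sum fun p _ => ?_) (by positivity)
        rw [← dft_eq_dft_restrictZMod]
        gcongr
        exact ZMod.norm_stdAddChar_intCast_sub_one_le p
    _ = _ := by
        simp only [Finset.mul_sum]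
        refine Finset.sum_congr rfl fun p _ => ?_
        rw [div_pow, mul_pow, sq_abs]
        ring

lemma norm_taylorRem_le_sup {x : ℤ} (hx : x ∈ Lambda L) (y : ℤ) (hΛ : (Lambda L).Nonempty) :
    ‖taylorRem L f x y‖ ≤ 4 * |(y : ℝ)| * (Lambda L).sup' hΛ (fun x' => ‖f x'‖) := by
  set M := (Lambda L).sup' hΛ (fun x' => ‖f x'‖)
  have hM : ∀ z, ‖f (wrap L z)‖ ≤ M := fun z => Finset.le_sup' (fun x' => ‖f x'‖) (wrap_mem z)
  rcases eq_or_ne y 0 with rfl | hy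
  · simp [taylorRem, wrap_eq_self hx]
  have hy1 : 1 ≤ |(y : ℝ)| := by exact_mod_cast Int.one_le_abs hy
  have hfx : ‖f x‖ ≤ M := wrap_eq_self hx ▸ hM x
  calc ‖taylorRem L f x y‖
      ≤ (‖f (wrap L (x + y))‖ + ‖f x‖) + |(y : ℝ)| * (‖f (wrap L (x + 1))‖ + ‖f x‖) := by
        refine (norm_sub_le _ _).trans (add_le_add (norm_sub_le _ _) ?_)
        rw [norm_mul, Complex.norm_intCast]
        gcongr
        exact norm_sub_le _ _
    _ ≤ (M + M) + |(y : ℝ)| * (M + M) := by gcongr <;> apply hM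
    _ ≤ 4 * |(y : ℝ)| * M := by nlinarith [(norm_nonneg _).trans hfx]

end Lambda

/-- Bounds on the first-order discrete Taylor remainder:
`|𝓡(f;x,y)| ≤ 4π² y² L⁻¹ Σ_{q∈Λ_L*} q² |f̂(q)|` and `|𝓡(f;x,y)| ≤ 4|y| sup_{x'} |f(x')|`. -/
theorem discrete_taylor_remainder_bounds (L : ℕ) (hL : 0 < L) (f : ℤ → ℂ) :
    ∀ x ∈ Lambda L, ∀ y ∈ Lambda L,
      ‖taylorRem L f x y‖
          ≤ 4 * π ^ 2 * (y : ℝ) ^ 2 *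
            ((L : ℝ)⁻¹ * ∑ p ∈ Lambda L, ((p : ℝ) / L) ^ 2 * ‖dft L f p‖) ∧
      ‖taylorRem L f x y‖
          ≤ 4 * |(y : ℝ)| *
            (Lambda L).sup' (by unfold Lambda; exact Finset.nonempty_Ioc.mpr (by omega))
              (fun x' => ‖f x'‖) := by
  have : NeZero L := ⟨hL.ne'⟩
  intro x hx y _
  exact ⟨norm_taylorRem_le_fourier f hx y, norm_taylorRem_le_sup f hx y _⟩
end

section
/- Let L ∈ ℕ, γ > 0, and let ω: Λ_L* → ℝ satisfy ω(k) > 0 for all k ∈ Λ_L*. Define the collision operator C̄[f](k) := γ (L^{−1} Σ_{q∈Λ_L*} f(q) − f(k)) for f: Λ_L* → ℂ. Suppose 𝓗, 𝓘, 𝓟, 𝓠: Λ_L* → ℂ satisfy the stationarity equations: (i) C̄[𝓗 − 𝓟](k) = 0 for all k; (ii) −γ 𝓘(k) = 0 for all k; (iii) −γ 𝓟(k) + 2i ω(k) 𝓠(k) + γ L^{−1} Σ_{q∈Λ_L*} 𝓟(q) − C̄[𝓗](k) = 0 for all k; and (iv) 2i ω(k) 𝓟(k) − γ 𝓠(k)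 = 0 for all k. Then 𝓘 ≡ 0, 𝓟 ≡ 0, 𝓠 ≡ 0, and there exists a constant E ∈ ℂ with 𝓗(k) = E for all k ∈ Λ_L*. -/
open Complex

/-- The collision operator `C̄[f](k) = γ (L⁻¹ Σ_{q∈Λ_L*} f(q) − f(k))`, with the dual
lattice indexed by `Λ_L`. -/
noncomputable def collision (L : ℕ) (γ : ℝ) (f : ℤ → ℂ) (k : ℤ) : ℂ :=
  (γ : ℂ) * ((L : ℂ)⁻¹ * ∑ q ∈ Lambda L, f q - f k)

section Collision

variable (L : ℕ) {γ : ℝ}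

theorem collision_sub (f g : ℤ → ℂ) (k : ℤ) :
    collision L γ (fun q => f q - g q) k = collision L γ f k - collision L γ g k := by
  simp only [collision, Finset.sum_sub_distrib]
  ring

theorem collision_eq_neg_add_mean (f : ℤ → ℂ) (k : ℤ) :
    collision L γ f k = -(γ : ℂ) * f k + (γ : ℂ) * ((L : ℂ)⁻¹ * ∑ q ∈ Lambda L, f q) := by
  unfold collision
  ring

theorem collision_eq_zero_iff (hγ : γ ≠ 0) (f : ℤ → ℂ) (k : ℤ) :
    collision L γ f k = 0 ↔ f k = (L : ℂ)⁻¹ * ∑ q ∈ Lambda L, f q := by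
  simp [collision, hγ, sub_eq_zero, eq_comm]

end Collision

theorem stationary_solutions_of_kinetic_system_general
    (L : ℕ) (γ : ℝ) (hγ : 0 < γ)
    (ω : ℤ → ℝ) (hω : ∀ k ∈ Lambda L, 0 < ω k)
    (H I P Q : ℤ → ℂ)
    (h1 : ∀ k ∈ Lambda L, collision L γ (fun q => H q - P q) k = 0)
    (h2 : ∀ k ∈ Lambda L, -(γ : ℂ) * I k = 0)
    (h3 : ∀ k ∈ Lambda L,
      -(γ : ℂ) * P k + 2 * Complex.I * (ω k : ℂ) * Q k
        + (γ : ℂ) * ((L : ℂ)⁻¹ * ∑ q ∈ Lambda L, P q) - collision L γ H k = 0)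
    (h4 : ∀ k ∈ Lambda L,
      2 * Complex.I * (ω k : ℂ) * P k - (γ : ℂ) * Q k = 0) :
    (∀ k ∈ Lambda L, I k = 0 ∧ P k = 0 ∧ Q k = 0) ∧
    ∃ E : ℂ, ∀ k ∈ Lambda L, H k = E := by
  have hγ₀ : γ ≠ 0 := hγ.ne'
  -- By (i), the forcing term of (iii) equals `γ 𝓟` and cancels the damping, leaving `2iω 𝓠 = 0`.
  have hQ : ∀ k ∈ Lambda L, Q k = 0 := fun k hk => by
    have hrot : 2 * Complex.I * (ω k : ℂ) * Q k = 0 := by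
      have hi := h1 k hk
      rw [collision_sub, collision_eq_neg_add_mean L P] at hi
      linear_combination h3 k hk + hi
    simpa [(hω k hk).ne', I_ne_zero] using hrot
  have hP : ∀ k ∈ Lambda L, P k = 0 := fun k hk => by
    simpa [hQ k hk, (hω k hk).ne', I_ne_zero] using h4 k hk
  refine ⟨fun k hk => ⟨by simpa [hγ₀] using h2 k hk, hP k hk, hQ k hk⟩,
    (L : ℂ)⁻¹ * ∑ q ∈ Lambda L, H q, fun k hk => ?_⟩
  have hH := (collision_eq_zero_iff L hγ₀ _ k).1 (h1 k hk)
  simpa [hP k hk, Finset.sum_sub_distrib, Finset.sum_eq_zero hP] using hH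

/-- The only stationary solutions of the homogeneous kinetic system are
`𝓘 = 𝓟 = 𝓠 = 0` and `𝓗` constant. -/
theorem stationary_solutions_of_kinetic_system
    (L : ℕ) (hL : 0 < L) (γ : ℝ) (hγ : 0 < γ)
    (ω : ℤ → ℝ) (hω : ∀ k ∈ Lambda L, 0 < ω k)
    (H I P Q : ℤ → ℂ)
    (h1 : ∀ k ∈ Lambda L, collision L γ (fun q => H q - P q) k = 0)
    (h2 : ∀ k ∈ Lambda L, -(γ : ℂ) * I k = 0)
    (h3 : ∀ k ∈ Lambda L,
      -(γ : ℂ) * P k + 2 * Complex.I * (ω k : ℂ) * Q k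
        + (γ : ℂ) * ((L : ℂ)⁻¹ * ∑ q ∈ Lambda L, P q) - collision L γ H k = 0)
    (h4 : ∀ k ∈ Lambda L,
      2 * Complex.I * (ω k : ℂ) * P k - (γ : ℂ) * Q k = 0) :
    (∀ k ∈ Lambda L, I k = 0 ∧ P k = 0 ∧ Q k = 0) ∧
    ∃ E : ℂ, ∀ k ∈ Lambda L, H k = E :=
  stationary_solutions_of_kinetic_system_general L γ hγ ω hω H I P Q h1 h2 h3 h4
end
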